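/- arXiv:1802.01992 — 3 statements merged into one kernel-verified Lean document; each statement's English description precedes it below -/
import Mathlib

section
/- Let ũ(x) = |x'|^4 - |x''|^4 for x = (x', x'') ∈ ℝ^m × ℝ^m, and let X = ∇ũ/|∇ũ| on the set where ∇ũ ≠ 0. If m ≥ 4, then div X has the same sign as ũ: div X ≥ 0 where ũ ≥ 0 and div X ≤ 0 where ũ ≤ 0 (on the set where ∇ũ ≠ 0). -/
/-!
Let the coordinates in two disjoint sets `S`, `T` play the roles of `x'` and `x''`, and write
`s = |x'|²`, `t = |x''|²`. Then `∇ũ = 4 (s x', -t x'')` and `|∇ũ| = 4ρ` with `ρ = √(s³ + t³)`,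
so `X = (s x', -t x'') / ρ`. Differentiating componentwise, for `|S| = |T| = m`,
`div X = (s - t) ((m + 2)(s³ + t³) - 3(s + t)(s² + t²)) / ρ³`, and the second factor equals
`(m - 4)(s³ + t³) + 3(s + t)(s - t)² ≥ 0`. Hence `div X` has the sign of `s - t`, which is the
sign of `ũ = s² - t²`.
-/

/-- The Euclidean divergence of a vector field `X : ℝⁿ → ℝⁿ`. -/
noncomputable def diverg {n : ℕ} (X : EuclideanSpace ℝ (Fin n) → EuclideanSpace ℝ (Fin n))
    (x : EuclideanSpace ℝ (Fin n)) : ℝ :=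
  ∑ i : Fin n, fderiv ℝ (fun y => X y i) x (EuclideanSpace.single i 1)

open Finset

namespace SimonsCone

noncomputable section

variable {ι : Type*}

def sqSum (S : Finset ι) (y : EuclideanSpace ℝ ι) : ℝ := ∑ i ∈ S, y i ^ 2

theorem sqSum_nonneg (S : Finset ι) (y : EuclideanSpace ℝ ι) : 0 ≤ sqSum S y :=
  sum_nonneg fun _ _ => sq_nonneg _

variable (S T : Finset ι)

def rho (y : EuclideanSpace ℝ ι) : ℝ := √(sqSum S y ^ 3 + sqSum T y ^ 3)

theorem rho_comm : rho T S = rho S T := by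
  ext y; simp only [rho, add_comm]

variable [Fintype ι]

def potential (y : EuclideanSpace ℝ ι) : ℝ := sqSum S y ^ 2 - sqSum T y ^ 2

def calibration (y : EuclideanSpace ℝ ι) : EuclideanSpace ℝ ι :=
  ‖gradient (potential S T) y‖⁻¹ • gradient (potential S T) y

theorem hasFDerivAt_apply_sq (i : ι) (y : EuclideanSpace ℝ ι) :
    HasFDerivAt (fun y : EuclideanSpace ℝ ι => y i ^ 2)
      ((2 * y i) • EuclideanSpace.proj (𝕜 := ℝ) i) y := by
  simpa using ((EuclideanSpace.proj (𝕜 := ℝ) i).hasFDerivAt (x := y)).pow 2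

theorem hasFDerivAt_sqSum (y : EuclideanSpace ℝ ι) :
    HasFDerivAt (sqSum S) (∑ i ∈ S, (2 * y i) • EuclideanSpace.proj (𝕜 := ℝ) i) y :=
  HasFDerivAt.fun_sum fun i _ => hasFDerivAt_apply_sq i y

theorem differentiable_sqSum : Differentiable ℝ (sqSum S) :=
  fun y => (hasFDerivAt_sqSum S y).differentiableAt

variable [DecidableEq ι]

theorem gradient_apply (f : EuclideanSpace ℝ ι → ℝ) (y : EuclideanSpace ℝ ι) (j : ι) :
    gradient f y j = fderiv ℝ f y (EuclideanSpace.single j 1) := by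
  rw [← InnerProductSpace.toDual_symm_apply, real_inner_comm, EuclideanSpace.inner_single_left]
  simp [gradient]

theorem fderiv_sqSum_single (y : EuclideanSpace ℝ ι) (j : ι) :
    fderiv ℝ (sqSum S) y (EuclideanSpace.single j 1) = if j ∈ S then 2 * y j else 0 := by
  simp [(hasFDerivAt_sqSum S y).fderiv, PiLp.single_apply]

theorem gradient_potential_apply (y : EuclideanSpace ℝ ι) (j : ι) :
    gradient (potential S T) y j =
      4 * ((if j ∈ S then sqSum S y * y j else 0) - (if j ∈ T then sqSum T y * y j else 0)) := by
  rw [gradient_apply, HasFDerivAt.fderiv (f := potential S T)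
    (((hasFDerivAt_sqSum S y).pow 2).fun_sub ((hasFDerivAt_sqSum T y).pow 2))]
  simp only [Nat.add_one_sub_one, pow_one, nsmul_eq_mul, Nat.cast_ofNat, sub_apply, smul_apply,
    _root_.sum_apply, PiLp.proj_apply, PiLp.single_apply, smul_eq_mul, mul_ite, mul_one, mul_zero,
    sum_ite_eq']
  split_ifs <;> ring

variable {S T}

theorem norm_gradient_potential (hST : Disjoint S T) (y : EuclideanSpace ℝ ι) :
    ‖gradient (potential S T) y‖ = 4 * rho S T y := by
  have hsq : ∀ j, ‖gradient (potential S T) y j‖ ^ 2 = 16 *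
      ((if j ∈ S then sqSum S y ^ 2 * y j ^ 2 else 0) +
        (if j ∈ T then sqSum T y ^ 2 * y j ^ 2 else 0)) := by
    intro j
    rw [Real.norm_eq_abs, sq_abs, gradient_potential_apply]
    by_cases hS : j ∈ S
    · simp only [hS, disjoint_left.1 hST hS, if_true, if_false, sub_zero, add_zero]
      ring
    · split_ifs <;> ring
  rw [EuclideanSpace.norm_eq, Fintype.sum_congr _ _ hsq, ← mul_sum, sum_add_distrib,
    sum_ite_mem, sum_ite_mem, univ_inter, univ_inter, ← mul_sum, ← mul_sum]
  rw [show (16 : ℝ) = 4 ^ 2 by norm_num, Real.sqrt_mul (by positivity), Real.sqrt_sq (by norm_num)]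
  rfl

theorem calibration_apply (hST : Disjoint S T) (y : EuclideanSpace ℝ ι) (j : ι) :
    calibration S T y j =
      ((if j ∈ S then sqSum S y * y j else 0) - (if j ∈ T then sqSum T y * y j else 0)) /
        rho S T y := by
  simp only [calibration, PiLp.smul_apply, smul_eq_mul, norm_gradient_potential hST,
    gradient_potential_apply]
  field_simp

theorem fderiv_sqSum_mul_div_rho_single {x : EuclideanSpace ℝ ι} (hx : rho S T x ≠ 0) {j : ι}
    (hjS : j ∈ S) (hjT : j ∉ T) :
    fderiv ℝ (fun y => sqSum S y * y j / rho S T y) x (EuclideanSpace.single j 1) =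
      (sqSum S x + 2 * x j ^ 2) / rho S T x - 3 * sqSum S x ^ 3 * x j ^ 2 / rho S T x ^ 3 := by
  have hq : sqSum S x ^ 3 + sqSum T x ^ 3 ≠ 0 := fun h => hx (by simp [rho, h])
  have hS := (differentiable_sqSum S x).hasFDerivAt
  have hT := (differentiable_sqSum T x).hasFDerivAt
  have hρ : HasFDerivAt (rho S T) _ x := ((hS.pow 3).fun_add (hT.pow 3)).sqrt hq
  have h := (hS.mul (EuclideanSpace.proj (𝕜 := ℝ) j).hasFDerivAt).mul
    ((hasDerivAt_inv hx).comp_hasFDerivAt x hρ)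
  simp_rw [div_eq_mul_inv]
  rw [HasFDerivAt.fderiv (f := fun y => sqSum S y * y j * (rho S T y)⁻¹) h]
  simp only [EuclideanSpace.coe_proj, Pi.mul_apply, one_div, mul_inv_rev, Nat.add_one_sub_one,
    nsmul_eq_mul, Nat.cast_ofNat, smul_add, neg_smul, smul_neg, Function.comp_apply,
    PiLp.proj_apply, add_apply, neg_apply, smul_apply, fderiv_sqSum_single, hjS, hjT, if_true,
    if_false, smul_eq_mul, mul_zero, neg_zero, add_zero, PiLp.single_eq_same, mul_one]
  rw [show √(sqSum S x ^ 3 + sqSum T x ^ 3) = rho S T x from rfl]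
  field_simp
  ring

theorem fderiv_calibration_single (hST : Disjoint S T) {x : EuclideanSpace ℝ ι}
    (hx : rho S T x ≠ 0) (j : ι) :
    fderiv ℝ (fun y => calibration S T y j) x (EuclideanSpace.single j 1) =
      (if j ∈ S then
          (sqSum S x + 2 * x j ^ 2) / rho S T x - 3 * sqSum S x ^ 3 * x j ^ 2 / rho S T x ^ 3
        else 0) -
      (if j ∈ T then
          (sqSum T x + 2 * x j ^ 2) / rho S T x - 3 * sqSum T x ^ 3 * x j ^ 2 / rho S T x ^ 3
        else 0) := by
  simp_rw [calibration_apply hST]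
  by_cases hjS : j ∈ S
  · have hjT := Finset.disjoint_left.1 hST hjS
    simp only [hjS, hjT, if_true, if_false, sub_zero]
    exact fderiv_sqSum_mul_div_rho_single hx hjS hjT
  by_cases hjT : j ∈ T
  · simp only [hjS, hjT, if_true, if_false, zero_sub, neg_div, fderiv_fun_neg,
      neg_apply, ← rho_comm S T]
    rw [fderiv_sqSum_mul_div_rho_single (by rwa [rho_comm]) hjT hjS]
  · simp [hjS, hjT]

end

theorem diverg_calibration {n : ℕ} {S T : Finset (Fin n)} (hST : Disjoint S T)
    {x : EuclideanSpace ℝ (Fin n)} (hx : rho S T x ≠ 0) :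
    diverg (calibration S T) x =
      ((#S + 2) * sqSum S x - (#T + 2) * sqSum T x) / rho S T x -
        3 * (sqSum S x ^ 4 - sqSum T x ^ 4) / rho S T x ^ 3 := by
  simp only [diverg, fderiv_calibration_single hST hx, sum_sub_distrib, sum_ite_mem, univ_inter]
  simp only [sum_add_distrib, ← sum_div, ← mul_sum, sum_const, nsmul_eq_mul, ← sqSum.eq_1]
  ring

theorem three_mul_add_mul_sq_add_sq_le {n s t : ℝ} (hn : 4 ≤ n) (hs : 0 ≤ s) (ht : 0 ≤ t) :
    3 * (s + t) * (s ^ 2 + t ^ 2) ≤ (n + 2) * (s ^ 3 + t ^ 3) := by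
  nlinarith [mul_nonneg (sub_nonneg.2 hn) (add_nonneg (pow_nonneg hs 3) (pow_nonneg ht 3)),
    mul_nonneg (add_nonneg hs ht) (sq_nonneg (s - t))]

theorem diverg_calibration_of_card_eq {n : ℕ} {S T : Finset (Fin n)} (hST : Disjoint S T)
    (hcard : #S = #T) {x : EuclideanSpace ℝ (Fin n)} (hx : rho S T x ≠ 0) :
    diverg (calibration S T) x = (sqSum S x - sqSum T x) *
      ((#S + 2) * (sqSum S x ^ 3 + sqSum T x ^ 3) -
        3 * (sqSum S x + sqSum T x) * (sqSum S x ^ 2 + sqSum T x ^ 2)) / rho S T x ^ 3 := by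
  have hρ : rho S T x ^ 2 = sqSum S x ^ 3 + sqSum T x ^ 3 :=
    Real.sq_sqrt (add_nonneg (pow_nonneg (sqSum_nonneg S x) 3) (pow_nonneg (sqSum_nonneg T x) 3))
  rw [diverg_calibration hST hx, hcard]
  field_simp
  rw [← hρ]
  ring

theorem disjoint_map_castAddEmb_natAddEmb (m n : ℕ) :
    Disjoint (univ.map (Fin.castAddEmb n)) (univ.map (Fin.natAddEmb m : Fin n ↪ Fin (m + n))) := by
  simp only [disjoint_left, mem_map, mem_univ, true_and, not_exists]
  rintro _ ⟨i, rfl⟩ j h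
  simp only [Fin.natAddEmb_apply, Fin.coe_castAddEmb, Fin.ext_iff, Fin.val_natAdd,
    Fin.val_castAdd] at h
  omega

end SimonsCone

open SimonsCone

/-- For `ũ(x) = |x'|⁴ - |x''|⁴` on `ℝ^m × ℝ^m` and `X = ∇ũ/|∇ũ|`, if `m ≥ 4` then
`div X` has the same sign as `ũ` on the set where `∇ũ ≠ 0`. -/
theorem simons_cone_calibration_sign (m : ℕ) (hm : 4 ≤ m)
    (u : EuclideanSpace ℝ (Fin (m + m)) → ℝ)
    (hu : ∀ x, u x = (∑ i : Fin m, x (Fin.castAdd m i) ^ 2) ^ 2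
        - (∑ i : Fin m, x (Fin.natAdd m i) ^ 2) ^ 2)
    (X : EuclideanSpace ℝ (Fin (m + m)) → EuclideanSpace ℝ (Fin (m + m)))
    (hX : ∀ x, X x = ‖gradient u x‖⁻¹ • gradient u x) :
    ∀ x, gradient u x ≠ 0 →
      (0 ≤ u x → 0 ≤ diverg X x) ∧ (u x ≤ 0 → diverg X x ≤ 0) := by
  intro x hx
  set S : Finset (Fin (m + m)) := univ.map (Fin.castAddEmb m)
  set T : Finset (Fin (m + m)) := univ.map (Fin.natAddEmb m)
  have hST : Disjoint S T := disjoint_map_castAddEmb_natAddEmb m m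
  obtain rfl : u = potential S T := funext fun y => by simp [hu, potential, sqSum, S, T]
  obtain rfl : X = calibration S T := funext hX
  have hρ : 0 < rho S T x := by
    rw [← norm_ne_zero_iff, norm_gradient_potential hST] at hx
    exact (Real.sqrt_nonneg _).lt_of_ne' (right_ne_zero_of_mul hx)
  have hs := sqSum_nonneg S x
  have ht := sqSum_nonneg T x
  have hfac := three_mul_add_mul_sq_add_sq_le (n := (#S : ℝ)) (by simpa [S] using hm) hs ht
  rw [diverg_calibration_of_card_eq hST (by simp [S, T]) hρ.ne']
  simp only [potential, sub_nonneg, sub_nonpos]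
  constructor
  · intro h
    have hts := (pow_le_pow_iff_left₀ ht hs two_ne_zero).1 h
    exact div_nonneg (mul_nonneg (sub_nonneg.2 hts) (sub_nonneg.2 hfac)) (by positivity)
  · intro h
    have hst := (pow_le_pow_iff_left₀ hs ht two_ne_zero).1 h
    exact div_nonpos_of_nonpos_of_nonneg
      (mul_nonpos_of_nonpos_of_nonneg (sub_nonpos.2 hst) (sub_nonneg.2 hfac)) (by positivity)
end

section
/- Energy upper bound: if u: ℝ^n → (-1,1) is a minimizer of the Allen-Cahn energy E_{B_R}(u) = ∫_{B_R} (|∇u|^2/2 + (1-u^2)^2/4) dx in every ball, and |u| ≤ 1, |∇u| ≤ C_0 in ℝ^n, then there exists a constant C depending only on n and C_0 such that E_{B_R}(u) ≤ C R^{n-1} for all R ≥ 1. -/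
/-!
Compare `u` on `B_R` with `v = (1 - φ) u + φ`, where `φ` is a cutoff equal to `1` on `B_{R-1/2}`,
vanishing off `B_R`, with gradient bounded independently of `R`. Then `v = u` off `B_R`, `v ≡ 1`
on `B_{R-1/2}` (where the energy density of `v` vanishes), and on the shell `|v| ≤ 1`,
`|∇v| ≤ C₀ + 2 sup |∇φ|`. By minimality, `E_{B_R}(u) ≤ E_{B_R}(v) ≲ |B_R \ B_{R-1/2}| ≲ R^{n-1}`.
-/

open MeasureTheory Set Metric Topology

theorem Real.smoothTransition.exists_lipschitzWith :
    ∃ K, LipschitzWith K Real.smoothTransition := by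
  obtain ⟨K, hK⟩ := (smoothTransition.contDiff (n := 1)).contDiffOn.exists_lipschitzOnWith
    one_ne_zero (convex_Icc (0 : ℝ) 1) isCompact_Icc
  refine ⟨K * 1, ?_⟩
  -- `smoothTransition` is constant off `[0, 1]`, so it factors through `projIcc 0 1`
  convert hK.to_restrict.comp (LipschitzWith.projIcc zero_le_one) using 1
  ext t
  exact (smoothTransition.projIcc (x := t)).symm

section Cutoff

variable {E : Type*} [NormedAddCommGroup E] {R : ℝ} {x : E}

noncomputable def radialCutoff (R : ℝ) (x : E) : ℝ := Real.smoothTransition (2 * (R - ‖x‖))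

theorem radialCutoff_mem_Icc (R : ℝ) (x : E) : radialCutoff R x ∈ Icc 0 1 :=
  ⟨Real.smoothTransition.nonneg _, Real.smoothTransition.le_one _⟩

theorem radialCutoff_eq_one_of_norm_le (hx : ‖x‖ ≤ R - 1 / 2) : radialCutoff R x = 1 :=
  Real.smoothTransition.one_of_one_le (by linarith)

theorem radialCutoff_eq_zero_of_le_norm (hx : R ≤ ‖x‖) : radialCutoff R x = 0 :=
  Real.smoothTransition.zero_of_nonpos (by linarith)

theorem contDiff_radialCutoff [InnerProductSpace ℝ E] {k : ℕ∞} (hR : 1 / 2 < R) :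
    ContDiff ℝ k (radialCutoff (E := E) R) := by
  refine contDiff_iff_contDiffAt.2 fun x => ?_
  rcases eq_or_ne x 0 with rfl | hx
  · -- the norm is not smooth at the origin, but the cutoff is identically `1` near it
    have hone : ∀ᶠ y in 𝓝 (0 : E), radialCutoff R y = 1 := by
      filter_upwards [ball_mem_nhds (0 : E) (sub_pos.2 hR)] with y hy
      exact radialCutoff_eq_one_of_norm_le (mem_ball_zero_iff.1 hy).le
    exact contDiffAt_const.congr_of_eventuallyEq hone
  · exact Real.smoothTransition.contDiffAt.comp x
      (contDiffAt_const.mul (contDiffAt_const.sub (contDiffAt_norm ℝ hx)))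

theorem exists_norm_fderiv_radialCutoff_le [NormedSpace ℝ E] :
    ∃ L, ∀ R (x : E), ‖fderiv ℝ (radialCutoff R) x‖ ≤ L := by
  obtain ⟨K, hK⟩ := Real.smoothTransition.exists_lipschitzWith
  refine ⟨K * 2, fun R x => ?_⟩
  have hlip : LipschitzWith (K * 2) (radialCutoff (E := E) R) := by
    refine LipschitzWith.of_dist_le_mul fun x y => ?_
    calc dist (radialCutoff R x) (radialCutoff R y)
        ≤ K * dist (2 * (R - ‖x‖)) (2 * (R - ‖y‖)) := hK.dist_le_mul _ _
      _ = K * 2 * |‖x‖ - ‖y‖| := by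
        rw [Real.dist_eq, ← mul_sub, abs_mul, abs_two, sub_sub_sub_cancel_left, abs_sub_comm]
        ring
      _ ≤ K * 2 * dist x y := by
        rw [dist_eq_norm]
        gcongr
        exact abs_norm_sub_norm_le x y
  simpa using norm_fderiv_le_of_lipschitz ℝ hlip (x₀ := x)

end Cutoff

section Comparison

variable {E : Type*} {φ u : E → ℝ} {x : E}

def cutoffComparison (φ u : E → ℝ) (x : E) : ℝ := (1 - φ x) * u x + φ x

theorem cutoffComparison_of_eq_zero (h : φ x = 0) : cutoffComparison φ u x = u x := by
  simp [cutoffComparison, h]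

theorem cutoffComparison_of_eq_one (h : φ x = 1) : cutoffComparison φ u x = 1 := by
  simp [cutoffComparison, h]

theorem abs_cutoffComparison_le_one (hφ : φ x ∈ Icc 0 1) (hu : |u x| ≤ 1) :
    |cutoffComparison φ u x| ≤ 1 := by
  obtain ⟨hφ0, hφ1⟩ := hφ
  obtain ⟨hu0, hu1⟩ := abs_le.1 hu
  unfold cutoffComparison
  exact abs_le.2 ⟨by nlinarith, by nlinarith⟩

theorem ContDiff.cutoffComparison [NormedAddCommGroup E] [NormedSpace ℝ E] {k : ℕ∞}
    (hφ : ContDiff ℝ k φ) (hu : ContDiff ℝ k u) : ContDiff ℝ k (cutoffComparison φ u) :=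
  ((contDiff_const.sub hφ).mul hu).add hφ

theorem norm_fderiv_cutoffComparison_le [NormedAddCommGroup E] [NormedSpace ℝ E]
    (hφd : DifferentiableAt ℝ φ x) (hud : DifferentiableAt ℝ u x) (hφ : φ x ∈ Icc 0 1)
    (hu : |u x| ≤ 1) :
    ‖fderiv ℝ (cutoffComparison φ u) x‖ ≤ ‖fderiv ℝ u x‖ + 2 * ‖fderiv ℝ φ x‖ := by
  have hderiv : HasFDerivAt (cutoffComparison φ u)
      ((1 - φ x) • fderiv ℝ u x + (1 - u x) • fderiv ℝ φ x) x := by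
    refine ((((hasFDerivAt_const (1 : ℝ) x).sub hφd.hasFDerivAt).mul hud.hasFDerivAt).add
      hφd.hasFDerivAt).congr_fderiv ?_
    ext v
    simp only [Pi.sub_apply, zero_sub, smul_neg, add_apply, smul_apply, smul_eq_mul, neg_apply]
    ring
  obtain ⟨hφ0, hφ1⟩ := hφ
  obtain ⟨hu0, hu1⟩ := abs_le.1 hu
  have h1φ : ‖1 - φ x‖ ≤ 1 := by rw [Real.norm_eq_abs, abs_le]; constructor <;> linarith
  have h1u : ‖1 - u x‖ ≤ 2 := by rw [Real.norm_eq_abs, abs_le]; constructor <;> linarith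
  rw [hderiv.fderiv]
  calc ‖(1 - φ x) • fderiv ℝ u x + (1 - u x) • fderiv ℝ φ x‖
      ≤ ‖1 - φ x‖ * ‖fderiv ℝ u x‖ + ‖1 - u x‖ * ‖fderiv ℝ φ x‖ :=
        (norm_add_le _ _).trans (add_le_add (norm_smul _ _).le (norm_smul _ _).le)
    _ ≤ 1 * ‖fderiv ℝ u x‖ + 2 * ‖fderiv ℝ φ x‖ := by gcongr
    _ = ‖fderiv ℝ u x‖ + 2 * ‖fderiv ℝ φ x‖ := by rw [one_mul]

end Comparison

section Density

variable {E : Type*} [NormedAddCommGroup E] [InnerProductSpace ℝ E] [CompleteSpace E]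
  {u : E → ℝ} {x : E}

theorem norm_gradient_eq_norm_fderiv (f : E → ℝ) (x : E) : ‖gradient f x‖ = ‖fderiv ℝ f x‖ :=
  LinearIsometryEquiv.norm_map _ _

noncomputable def allenCahnDensity (u : E → ℝ) (x : E) : ℝ :=
  ‖gradient u x‖ ^ 2 / 2 + (1 - u x ^ 2) ^ 2 / 4

theorem allenCahnDensity_le {K : ℝ} (hgrad : ‖gradient u x‖ ≤ K) (hu : |u x| ≤ 1) :
    allenCahnDensity u x ≤ K ^ 2 / 2 + 1 / 4 := by
  have hgrad2 : ‖gradient u x‖ ^ 2 ≤ K ^ 2 := pow_le_pow_left₀ (norm_nonneg _) hgrad 2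
  have hu2 : u x ^ 2 ≤ 1 := by rw [← sq_abs]; nlinarith [abs_nonneg (u x)]
  have hpot : (1 - u x ^ 2) ^ 2 ≤ 1 := by nlinarith [sq_nonneg (u x)]
  unfold allenCahnDensity
  linarith

theorem allenCahnDensity_eq_zero_of_eventuallyEq_one (h : u =ᶠ[𝓝 x] fun _ => 1) :
    allenCahnDensity u x = 0 := by
  simp [allenCahnDensity, h.gradient_eq, h.eq_of_nhds]

theorem ContDiff.continuous_allenCahnDensity (hu : ContDiff ℝ 1 u) :
    Continuous (allenCahnDensity u) := by
  have hgrad : Continuous (gradient u) :=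
    (InnerProductSpace.toDual ℝ E).symm.continuous.comp (hu.continuous_fderiv one_ne_zero)
  unfold allenCahnDensity
  fun_prop

end Density

theorem MeasureTheory.setIntegral_le_mul_measureReal_sdiff {α : Type*} [MeasurableSpace α]
    {μ : Measure α} {f : α → ℝ} {s t : Set α} {K : ℝ} (hs : MeasurableSet s) (hμs : μ s ≠ ⊤)
    (ht : MeasurableSet t) (hf : IntegrableOn f s μ) (hfK : ∀ x ∈ s, f x ≤ K)
    (hf0 : ∀ x ∈ t, f x = 0) :
    ∫ x in s, f x ∂μ ≤ K * μ.real (s \ t) := by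
  have hle : ∀ x ∈ s, f x ≤ (s \ t).indicator (fun _ => K) x := by
    intro x hx
    by_cases hxt : x ∈ t
    · rw [indicator_of_notMem (fun h => h.2 hxt), hf0 x hxt]
    · rw [indicator_of_mem (mem_sdiff_of_mem hx hxt)]
      exact hfK x hx
  have hind : IntegrableOn ((s \ t).indicator fun _ => K) s μ :=
    (integrableOn_const hμs).indicator (hs.diff ht)
  calc ∫ x in s, f x ∂μ ≤ ∫ x in s, (s \ t).indicator (fun _ => K) x ∂μ :=
        setIntegral_mono_on hf hind hs hle
    _ = K * μ.real (s \ t) := by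
        rw [setIntegral_indicator (hs.diff ht), inter_eq_self_of_subset_right sdiff_subset,
          setIntegral_const, smul_eq_mul, mul_comm]

theorem MeasureTheory.Measure.addHaar_real_ball_sdiff_ball {E : Type*} [NormedAddCommGroup E]
    [NormedSpace ℝ E] [FiniteDimensional ℝ E] [MeasurableSpace E] [BorelSpace E]
    (μ : Measure E) [μ.IsAddHaarMeasure] (x : E) {r R : ℝ} (hr : 0 < r) (hrR : r ≤ R) :
    μ.real (ball x R \ ball x r) =
      (R ^ Module.finrank ℝ E - r ^ Module.finrank ℝ E) * μ.real (ball (0 : E) 1) := by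
  have hR : 0 < R := hr.trans_le hrR
  rw [measureReal_sdiff (ball_subset_ball hrR) measurableSet_ball measure_ball_lt_top.ne,
    measureReal_def, measureReal_def, Measure.addHaar_ball_of_pos μ x hR,
    Measure.addHaar_ball_of_pos μ x hr, ENNReal.toReal_mul, ENNReal.toReal_mul,
    ENNReal.toReal_ofReal (by positivity), ENNReal.toReal_ofReal (by positivity), sub_mul]
  rfl

theorem setIntegral_allenCahnDensity_cutoffComparison_le {E : Type*} [NormedAddCommGroup E]
    [InnerProductSpace ℝ E] [FiniteDimensional ℝ E] [MeasurableSpace E] [BorelSpace E]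
    (μ : Measure E) [μ.IsAddHaarMeasure] {u : E → ℝ} {C₀ L R : ℝ} (hu : ContDiff ℝ 1 u)
    (hu1 : ∀ x, |u x| ≤ 1) (hgrad : ∀ x, ‖gradient u x‖ ≤ C₀)
    (hL : ∀ x : E, ‖fderiv ℝ (radialCutoff R) x‖ ≤ L) (hR : 1 / 2 < R) :
    ∫ x in ball (0 : E) R, allenCahnDensity (cutoffComparison (radialCutoff R) u) x ∂μ ≤
      ((C₀ + 2 * L) ^ 2 / 2 + 1 / 4) * μ.real (ball 0 R \ ball 0 (R - 1 / 2)) := by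
  have hφ : ContDiff ℝ 1 (radialCutoff (E := E) R) := contDiff_radialCutoff hR
  have hv := hφ.cutoffComparison hu
  refine setIntegral_le_mul_measureReal_sdiff measurableSet_ball measure_ball_lt_top.ne
    measurableSet_ball ((hv.continuous_allenCahnDensity.continuousOn.integrableOn_compact
      (isCompact_closedBall 0 R)).mono_set ball_subset_closedBall) (fun x _ => ?_) (fun x hx => ?_)
  · refine allenCahnDensity_le ?_ (abs_cutoffComparison_le_one (radialCutoff_mem_Icc R x) (hu1 x))
    rw [norm_gradient_eq_norm_fderiv]
    calc _ ≤ ‖fderiv ℝ u x‖ + 2 * ‖fderiv ℝ (radialCutoff R) x‖ :=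
          norm_fderiv_cutoffComparison_le (hφ.differentiable one_ne_zero x)
            (hu.differentiable one_ne_zero x) (radialCutoff_mem_Icc R x) (hu1 x)
      _ ≤ C₀ + 2 * L := by
          rw [← norm_gradient_eq_norm_fderiv]
          gcongr
          exacts [hgrad x, hL x]
  · refine allenCahnDensity_eq_zero_of_eventuallyEq_one ?_
    filter_upwards [isOpen_ball.mem_nhds hx] with y hy
    exact cutoffComparison_of_eq_one (radialCutoff_eq_one_of_norm_le (mem_ball_zero_iff.1 hy).le)

/-- Energy upper bound for minimizers of the Allen-Cahn energy: there is a constant `C`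
depending only on `n` and `C₀` such that any minimizer `u : ℝⁿ → (-1,1)` with
`|∇u| ≤ C₀` satisfies `E_{B_R}(u) ≤ C R^{n-1}` for all `R ≥ 1`. -/
theorem allen_cahn_energy_upper_bound (n : ℕ) (C₀ : ℝ) :
    ∃ C : ℝ, ∀ u : EuclideanSpace ℝ (Fin n) → ℝ, ContDiff ℝ 1 u →
      (∀ x, u x ∈ Set.Ioo (-1 : ℝ) 1) → (∀ x, ‖gradient u x‖ ≤ C₀) →
      (∀ R > (0 : ℝ), ∀ v : EuclideanSpace ℝ (Fin n) → ℝ, ContDiff ℝ 1 v →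
        (∀ x ∉ Metric.ball (0 : EuclideanSpace ℝ (Fin n)) R, v x = u x) →
        (∫ x in Metric.ball (0 : EuclideanSpace ℝ (Fin n)) R,
            (‖gradient u x‖ ^ 2 / 2 + (1 - u x ^ 2) ^ 2 / 4))
          ≤ ∫ x in Metric.ball (0 : EuclideanSpace ℝ (Fin n)) R,
              (‖gradient v x‖ ^ 2 / 2 + (1 - v x ^ 2) ^ 2 / 4)) →
      ∀ R : ℝ, 1 ≤ R →
        (∫ x in Metric.ball (0 : EuclideanSpace ℝ (Fin n)) R,
            (‖gradient u x‖ ^ 2 / 2 + (1 - u x ^ 2) ^ 2 / 4)) ≤ C * R ^ (n - 1) := by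
  obtain ⟨L, hL⟩ := exists_norm_fderiv_radialCutoff_le (E := EuclideanSpace ℝ (Fin n))
  set ω := volume.real (ball (0 : EuclideanSpace ℝ (Fin n)) 1)
  set K := (C₀ + 2 * L) ^ 2 / 2 + 1 / 4
  refine ⟨K * (n * ω), fun u hu hu1 hgrad hmin R hR => ?_⟩
  have hshell : R ^ n - (R - 1 / 2) ^ n ≤ n * R ^ (n - 1) := by
    have h := abs_pow_sub_pow_le R (R - 1 / 2) n
    rw [abs_of_nonneg (by linarith : 0 ≤ R), abs_of_nonneg (by linarith : (0 : ℝ) ≤ R - 1 / 2),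
      max_eq_left (by linarith), sub_sub_cancel, abs_of_pos (one_half_pos (α := ℝ))] at h
    have : 0 ≤ (n : ℝ) * R ^ (n - 1) := by positivity
    linarith [le_abs_self (R ^ n - (R - 1 / 2) ^ n)]
  calc _ ≤ ∫ x in ball 0 R, allenCahnDensity (cutoffComparison (radialCutoff R) u) x :=
        hmin R (by linarith) _ ((contDiff_radialCutoff (by linarith)).cutoffComparison hu)
          fun x hx => cutoffComparison_of_eq_zero
            (radialCutoff_eq_zero_of_le_norm (by simpa using hx))
    _ ≤ K * volume.real (ball (0 : EuclideanSpace ℝ (Fin n)) R \ ball 0 (R - 1 / 2)) :=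
        setIntegral_allenCahnDensity_cutoffComparison_le volume hu
          (fun x => (abs_lt.2 (hu1 x)).le) hgrad (hL R) (by linarith)
    _ = K * ((R ^ n - (R - 1 / 2) ^ n) * ω) := by
        rw [Measure.addHaar_real_ball_sdiff_ball volume 0 (by linarith) (by linarith),
          finrank_euclideanSpace_fin]
    _ ≤ K * (n * ω) * R ^ (n - 1) := by
        rw [mul_assoc, mul_right_comm (n : ℝ)]
        gcongr
end

section
/- Let Ω ⊂ ℝ^n be a smooth bounded domain and let u ∈ C^2(Ω̄) satisfy ∂u/∂ν = 1 on ∂Ω. Define the lower contact set Γ_u = {x ∈ Ω : u(y) ≥ u(x) + ∇u(x)·(y-x) for all y ∈ Ω̄}. Then the open unit ball B_1(0) ⊂ ℝ^n is contained in ∇u(Γ_u). -/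
open MeasureTheory

private lemma aux_decr {γ : ℝ → ℝ} {c : ℝ} (h : HasDerivAt γ c 0) (hc : c < 0) :
    ∀ᶠ t in nhdsWithin (0:ℝ) (Set.Ioi 0), γ t < γ 0 := by
  rw [hasDerivAt_iff_tendsto_slope] at h
  have hev : ∀ᶠ t in nhdsWithin (0:ℝ) {(0:ℝ)}ᶜ, slope γ 0 t < 0 := h.eventually_lt_const hc
  have hle : nhdsWithin (0:ℝ) (Set.Ioi 0) ≤ nhdsWithin (0:ℝ) {(0:ℝ)}ᶜ :=
    nhdsWithin_mono _ (fun t ht => ne_of_gt ht)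
  filter_upwards [hle hev, self_mem_nhdsWithin] with t hslope (ht : 0 < t)
  have ht0 : t ≠ 0 := ne_of_gt ht
  have hmul : slope γ 0 t * t < 0 := mul_neg_of_neg_of_pos hslope ht
  have hs : slope γ 0 t = (γ t - γ 0) / t := by
    simp [slope_def_field]
  rw [hs, div_mul_cancel₀ _ ht0] at hmul
  linarith

/-- Lower contact set inclusion: if `u ∈ C²(closure Ω)` has `∂u/∂ν = 1` on the boundary
of the smooth bounded domain `Ω = {φ < 0}` (with `ν = ∇φ/|∇φ|` the outer unit normal),
then the unit ball is contained in the image `∇u(Γ_u)` of the lower contact set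
`Γ_u = {x ∈ Ω : u(y) ≥ u(x) + ∇u(x)·(y-x) for all y ∈ closure Ω}`. -/
theorem unit_ball_in_gradient_image_of_contact_set (n : ℕ) (hn : 1 ≤ n)
    (φ : EuclideanSpace ℝ (Fin n) → ℝ) (hφ : ContDiff ℝ (⊤ : ℕ∞) φ)
    (Ω : Set (EuclideanSpace ℝ (Fin n)))
    (hΩdef : Ω = {x | φ x < 0}) (hfr : frontier Ω = {x | φ x = 0})
    (hne : Ω.Nonempty) (hb : Bornology.IsBounded Ω)
    (hgrad : ∀ x ∈ frontier Ω, gradient φ x ≠ 0)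
    (u : EuclideanSpace ℝ (Fin n) → ℝ) (hu : ContDiffOn ℝ 2 u (closure Ω))
    (hnu : ∀ x ∈ frontier Ω,
      (inner ℝ (gradient u x) (‖gradient φ x‖⁻¹ • gradient φ x) : ℝ) = 1) :
    Metric.ball (0 : EuclideanSpace ℝ (Fin n)) 1 ⊆
      gradient u '' {x ∈ Ω | ∀ y ∈ closure Ω,
        u x + (inner ℝ (gradient u x) (y - x) : ℝ) ≤ u y} := by
  intro p hp
  have hp1 : ‖p‖ < 1 := by simpa [Metric.mem_ball] using hp
  set f : EuclideanSpace ℝ (Fin n) → ℝ := fun y => u y - (inner ℝ p y : ℝ) with hf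
  have hΩopen : IsOpen Ω := by
    rw [hΩdef]; exact isOpen_lt hφ.continuous continuous_const
  have hKc : IsCompact (closure Ω) :=
    Metric.isCompact_of_isClosed_isBounded isClosed_closure hb.closure
  have hfc : ContinuousOn f (closure Ω) :=
    hu.continuousOn.sub (Continuous.continuousOn (continuous_const.inner continuous_id))
  obtain ⟨x₀, hx₀K, hmin⟩ := hKc.exists_isMinOn (hne.mono subset_closure) hfc
  -- boundary case is impossible
  have hx₀Ω : x₀ ∈ Ω := by
    by_contra hxΩ
    have hxfr : x₀ ∈ frontier Ω := by
      rcases (closure_eq_self_union_frontier Ω ▸ hx₀K) with h | h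
      · exact absurd h hxΩ
      · exact h
    set g := gradient u x₀ with hg
    set w := gradient φ x₀ with hwdef
    have hw : w ≠ 0 := hgrad x₀ hxfr
    have hnu' : (inner ℝ g (‖w‖⁻¹ • w) : ℝ) = 1 := hnu x₀ hxfr
    have hgne : g ≠ 0 := by
      intro h0
      rw [h0] at hnu'
      simp at hnu'
    have hud : DifferentiableAt ℝ u x₀ := by
      by_contra hnd
      exact hgne (gradient_eq_zero_of_not_differentiableAt hnd)
    have hgu : HasGradientAt u g x₀ := hud.hasGradientAt
    set v : EuclideanSpace ℝ (Fin n) := -(‖w‖⁻¹ • w) with hv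
    have hnv : ‖v‖ = 1 := by
      rw [hv, norm_neg, norm_smul, norm_inv, norm_norm,
        inv_mul_cancel₀ (norm_ne_zero_iff.mpr hw)]
    have hα : ∀ t : ℝ, HasDerivAt (fun t : ℝ => x₀ + t • v) v t := by
      intro t
      simpa using ((hasDerivAt_id t).smul_const v).const_add x₀
    have hφd : HasGradientAt φ w x₀ :=
      ((hφ.differentiable (by simp)) x₀).hasGradientAt
    have hwv : (inner ℝ w v : ℝ) = -‖w‖ := by
      rw [hv, inner_neg_right, real_inner_smul_right, real_inner_self_eq_norm_sq]
      field_simp [norm_ne_zero_iff.mpr hw]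
    have hgv : (inner ℝ g v : ℝ) = -1 := by
      rw [hv, inner_neg_right, hnu']
    have hpv : (inner ℝ p v : ℝ) > -1 := by
      have := abs_real_inner_le_norm p v
      rw [hnv, mul_one] at this
      have := neg_abs_le (inner ℝ p v : ℝ)
      nlinarith [abs_nonneg (inner ℝ p v : ℝ)]
    -- φ decreases along v
    have hψ : HasDerivAt (fun t : ℝ => φ (x₀ + t • v)) (inner ℝ w v : ℝ) 0 := by
      have := (show HasFDerivAt φ _ (x₀ + (0:ℝ) • v) by simpa using hasGradientAt_iff_hasFDerivAt.mp hφd).comp_hasDerivAt 0 (hα 0)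
      simp [InnerProductSpace.toDual_apply_apply] at this; exact this
    have hψev : ∀ᶠ t in nhdsWithin (0:ℝ) (Set.Ioi 0),
        φ (x₀ + t • v) < φ (x₀ + (0:ℝ) • v) :=
      aux_decr hψ (by rw [hwv]; simpa using norm_pos_iff.mpr hw)
    -- f decreases along v
    have hFd : HasDerivAt (fun t : ℝ => f (x₀ + t • v))
        ((inner ℝ g v : ℝ) - (inner ℝ p v : ℝ)) 0 := by
      have h1 : HasDerivAt (fun t : ℝ => u (x₀ + t • v)) (inner ℝ g v : ℝ) 0 := by
        have := (show HasFDerivAt u _ (x₀ + (0:ℝ) • v) by simpa using hasGradientAt_iff_hasFDerivAt.mp hgu).comp_hasDerivAt 0 (hα 0)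
        simp [InnerProductSpace.toDual_apply_apply] at this; exact this
      have h2 : HasDerivAt (fun t : ℝ => (inner ℝ p (x₀ + t • v) : ℝ))
          (inner ℝ p v : ℝ) 0 := by
        have := ((innerSL ℝ p).hasFDerivAt (x := x₀ + (0:ℝ) • v)).comp_hasDerivAt 0 (hα 0)
        simp at this; exact this
      exact h1.sub h2
    have hFev : ∀ᶠ t in nhdsWithin (0:ℝ) (Set.Ioi 0),
        f (x₀ + t • v) < f (x₀ + (0:ℝ) • v) :=
      aux_decr hFd (by rw [hgv]; linarith)
    have hx₀φ : φ x₀ = 0 := by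
      have := hfr ▸ hxfr
      exact this
    obtain ⟨t, hφt, hft⟩ := (hψev.and hFev).exists
    have hmem : x₀ + t • v ∈ Ω := by
      rw [hΩdef]
      simpa [hx₀φ] using hφt
    have := hmin (subset_closure hmem)
    simp only [zero_smul, add_zero] at hft
    exact absurd this (by simpa using not_le.mpr hft)
  -- interior case: x₀ is the desired point
  have hnhds : closure Ω ∈ nhds x₀ :=
    Filter.mem_of_superset (hΩopen.mem_nhds hx₀Ω) subset_closure
  have hud : DifferentiableAt ℝ u x₀ :=
    ((hu.differentiableOn (by norm_num)).differentiableAt hnhds)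
  have hloc : IsLocalMin f x₀ := hmin.isLocalMin hnhds
  have hfd : HasFDerivAt f (fderiv ℝ u x₀ - innerSL ℝ p) x₀ :=
    hud.hasFDerivAt.sub ((innerSL ℝ p).hasFDerivAt)
  have hzero := hloc.hasFDerivAt_eq_zero hfd
  have hfderiv : fderiv ℝ u x₀ = innerSL ℝ p := by
    rwa [sub_eq_zero] at hzero
  have hgp : HasGradientAt u p x₀ := by
    rw [hasGradientAt_iff_hasFDerivAt]
    have : (InnerProductSpace.toDual ℝ (EuclideanSpace ℝ (Fin n))) p = innerSL ℝ p := by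
      ext y; simp [InnerProductSpace.toDual_apply_apply]
    rw [this, ← hfderiv]
    exact hud.hasFDerivAt
  have hgup : gradient u x₀ = p := hgp.gradient
  refine ⟨x₀, ⟨hx₀Ω, ?_⟩, hgup⟩
  intro y hy
  have := hmin hy
  simp only [hf] at this
  rw [hgup, inner_sub_right]
  simp only [Set.mem_setOf_eq] at this ⊢
  linarith [this]
end
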